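/- arXiv:2111.08131 — 3 statements merged into one kernel-verified Lean document; each statement's English description precedes it below -/
import Mathlib

section
/- Let {M^x_a} be projective submeasurements (each M^x_a a projection, Σ_a M^x_a ≤ 1) and {N^x_a} submeasurements. If E_{x∼μ} Σ_a ‖M^x_a − N^x_a‖_τ² ≤ δ², then E_{x∼μ} Σ_{a≠b} τ(M^x_a N^x_b) ≤ δ. -/
open scoped Matrix ComplexOrder BigOperators

/-- The normalized trace (the unique tracial state on n×n complex matrices). -/
noncomputable def tau {n : ℕ} (A : Matrix (Fin n) (Fin n) ℂ) : ℂ := A.trace / (n : ℂ)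

/-- The squared τ-norm, `‖A‖_τ² = τ(A*A)` (a real number). -/
noncomputable def tauNormSq {n : ℕ} (A : Matrix (Fin n) (Fin n) ℂ) : ℝ := (tau (Aᴴ * A)).re

/-- A submeasurement: a family of positive semidefinite operators with sum at most the identity. -/
def IsSubmeasurement {n : ℕ} {α : Type*} [Fintype α]
    (M : α → Matrix (Fin n) (Fin n) ℂ) : Prop :=
  (∀ a, (M a).PosSemidef) ∧ (1 - ∑ a, M a).PosSemidef

/-- A measurement: a family of positive semidefinite operators summing to the identity. -/
def IsMeasurement {n : ℕ} {α : Type*} [Fintype α]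
    (M : α → Matrix (Fin n) (Fin n) ℂ) : Prop :=
  (∀ a, (M a).PosSemidef) ∧ (∑ a, M a) = 1

/-- A projective submeasurement: a family of orthogonal projections with sum at most the identity. -/
def IsProjectiveSubmeasurement {n : ℕ} {α : Type*} [Fintype α]
    (M : α → Matrix (Fin n) (Fin n) ℂ) : Prop :=
  (∀ a, (M a).IsHermitian ∧ M a * M a = M a) ∧ (1 - ∑ a, M a).PosSemidef

/-!
For a projection `P = M^x_a` we have `Σ_{b ≠ a} τ(P N_b) = τ(P Σ_b N_b) - τ(P N_a)`, and
`τ(P (1 - Σ_b N_b)) ≥ 0` turns this into at most `τ(P) - τ(P N_a) = τ(P (P - N_a))`.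
Cauchy–Schwarz, first for the trace inner product and then for the `μ`-weighted sum over `(x, a)`,
bounds the total by `(E_x Σ_a ‖M^x_a‖_τ²)^{1/2} · δ`, and `Σ_a ‖M^x_a‖_τ² = τ(Σ_a M^x_a) ≤ 1`
because the `M^x_a` are projections.
-/

open Matrix Finset

theorem Finset.sq_sum_mul_sum_le_of_sq_le_mul {X α : Type*} (s : Finset X) (t : Finset α)
    {w : X → ℝ} {r f g : X → α → ℝ} (hw : ∀ x ∈ s, 0 ≤ w x)
    (hf : ∀ x ∈ s, ∀ a ∈ t, 0 ≤ f x a) (hg : ∀ x ∈ s, ∀ a ∈ t, 0 ≤ g x a)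
    (hr : ∀ x ∈ s, ∀ a ∈ t, r x a ^ 2 ≤ f x a * g x a) :
    (∑ x ∈ s, w x * ∑ a ∈ t, r x a) ^ 2
      ≤ (∑ x ∈ s, w x * ∑ a ∈ t, f x a) * ∑ x ∈ s, w x * ∑ a ∈ t, g x a := by
  refine sum_sq_le_sum_mul_sum_of_sq_le_mul s
    (fun x hx => mul_nonneg (hw x hx) (sum_nonneg (hf x hx)))
    (fun x hx => mul_nonneg (hw x hx) (sum_nonneg (hg x hx))) fun x hx => ?_
  rw [mul_pow, mul_mul_mul_comm, ← sq]
  exact mul_le_mul_of_nonneg_left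
    (sum_sq_le_sum_mul_sum_of_sq_le_mul t (hf x hx) (hg x hx) (hr x hx)) (sq_nonneg _)

namespace Matrix
variable {n 𝕜 : Type*} [Fintype n] [RCLike 𝕜]

theorem re_trace_conjTranspose_mul_sq_le [DecidableEq n] (A B : Matrix n n 𝕜) :
    RCLike.re (Aᴴ * B).trace ^ 2 ≤ RCLike.re (Aᴴ * A).trace * RCLike.re (Bᴴ * B).trace := by
  let := toMatrixSeminormedAddCommGroup (1 : Matrix n n 𝕜) PosSemidef.one
  let := toMatrixInnerProductSpace (1 : Matrix n n 𝕜) PosSemidef.one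
  have hinner : ∀ C D : Matrix n n 𝕜, inner 𝕜 C D = (Cᴴ * D).trace := fun C D => by
    change (D * 1 * Cᴴ).trace = _
    rw [mul_one, trace_mul_comm]
  have h := inner_mul_inner_self_le (𝕜 := 𝕜) A B
  rw [norm_inner_symm B A, ← sq, hinner, hinner, hinner] at h
  exact (sq_le_sq.mpr ((RCLike.abs_re_le_norm _).trans_eq (abs_norm _).symm)).trans h

theorem PosSemidef.trace_idempotent_mul_nonneg {P T : Matrix n n 𝕜} (hT : T.PosSemidef)
    (hP : P.IsHermitian) (hPP : P * P = P) : 0 ≤ (P * T).trace := by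
  have h : (P * T).trace = (Pᴴ * T * P).trace :=
    calc (P * T).trace = (T * (P * P)).trace := by rw [hPP, trace_mul_comm]
      _ = (Pᴴ * T * P).trace := by rw [hP.eq, ← mul_assoc, trace_mul_comm, ← mul_assoc]
  exact h ▸ (hT.conjTranspose_mul_mul_same P).trace_nonneg

end Matrix

section tau
variable {n : ℕ}

theorem re_tau (A : Matrix (Fin n) (Fin n) ℂ) : (tau A).re = A.trace.re / n := by
  simp [tau]

theorem re_tau_nonneg {A : Matrix (Fin n) (Fin n) ℂ} (hA : 0 ≤ A.trace) : 0 ≤ (tau A).re :=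
  re_tau A ▸ div_nonneg (Complex.nonneg_iff.mp hA).1 n.cast_nonneg

theorem tauNormSq_nonneg (A : Matrix (Fin n) (Fin n) ℂ) : 0 ≤ tauNormSq A :=
  re_tau_nonneg (posSemidef_conjTranspose_mul_self A).trace_nonneg

theorem sq_re_tau_conjTranspose_mul_le (A B : Matrix (Fin n) (Fin n) ℂ) :
    (tau (Aᴴ * B)).re ^ 2 ≤ tauNormSq A * tauNormSq B := by
  rw [tauNormSq, tauNormSq, re_tau, re_tau, re_tau, div_pow, div_mul_div_comm, ← sq]
  exact div_le_div_of_nonneg_right (re_trace_conjTranspose_mul_sq_le A B) (sq_nonneg _)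

theorem sum_ite_re_tau_mul_le {α : Type*} [Fintype α] [DecidableEq α]
    {P : Matrix (Fin n) (Fin n) ℂ} (hP : P.IsHermitian) (hPP : P * P = P)
    {N : α → Matrix (Fin n) (Fin n) ℂ} (hN : (1 - ∑ b, N b).PosSemidef) (a : α) :
    ∑ b, (if a = b then 0 else (tau (P * N b)).re) ≤ (tau (Pᴴ * (P - N a))).re := by
  have hoff : ∑ b, (if a = b then 0 else (tau (P * N b)).re)
      = (tau (P * ∑ b, N b)).re - (tau (P * N a)).re := by
    rw [sum_ite, sum_const_zero, zero_add, filter_ne, sum_erase_eq_sub (mem_univ a)]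
    simp [re_tau, mul_sum, trace_sum, sum_div]
  have hsub : 0 ≤ (tau P).re - (tau (P * ∑ b, N b)).re := by
    have := re_tau_nonneg (hN.trace_idempotent_mul_nonneg hP hPP)
    simpa [re_tau, mul_sub, trace_sub, sub_div] using this
  have hdiag : (tau (Pᴴ * (P - N a))).re = (tau P).re - (tau (P * N a)).re := by
    simp [re_tau, hP.eq, mul_sub, hPP, trace_sub, sub_div]
  linarith

theorem IsProjectiveSubmeasurement.sum_tauNormSq_le_one {α : Type*} [Fintype α]
    {M : α → Matrix (Fin n) (Fin n) ℂ} (hM : IsProjectiveSubmeasurement M) :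
    ∑ a, tauNormSq (M a) ≤ 1 := by
  have hproj : ∀ a, tauNormSq (M a) = (tau (M a)).re := fun a => by
    rw [tauNormSq, (hM.1 a).1.eq, (hM.1 a).2]
  have hrest : 0 ≤ (tau (1 - ∑ a, M a)).re := re_tau_nonneg hM.2.trace_nonneg
  calc ∑ a, tauNormSq (M a) = (tau (∑ a, M a)).re := by
        simp [hproj, re_tau, trace_sum, sum_div]
    _ ≤ (tau (1 : Matrix (Fin n) (Fin n) ℂ)).re := by
        simpa [re_tau, trace_sub, sub_div] using hrest
    _ ≤ 1 := by simpa [re_tau] using div_self_le_one (n : ℝ)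

end tau

/-- Closeness to consistency: if `M` is a projective submeasurement, `N` a submeasurement, and
they are `δ`-close on average over `x ∼ μ`, then they are `δ`-consistent. -/
theorem closeness_to_consistency {n : ℕ} {X α : Type*}
    [Fintype X] [Fintype α] [DecidableEq α]
    (μ : X → ℝ) (hμ0 : ∀ x, 0 ≤ μ x) (hμ1 : ∑ x, μ x = 1)
    (M N : X → α → Matrix (Fin n) (Fin n) ℂ)
    (hM : ∀ x, IsProjectiveSubmeasurement (M x)) (hN : ∀ x, IsSubmeasurement (N x))
    (δ : ℝ) (hδ : 0 ≤ δ)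
    (h : ∑ x, μ x * ∑ a, tauNormSq (M x a - N x a) ≤ δ ^ 2) :
    ∑ x, μ x * ∑ a, ∑ b, (if a = b then 0 else (tau (M x a * N x b)).re) ≤ δ := by
  have hmass : ∑ x, μ x * ∑ a, tauNormSq (M x a) ≤ 1 :=
    calc _ ≤ ∑ x, μ x * 1 :=
          sum_le_sum fun x _ => mul_le_mul_of_nonneg_left (hM x).sum_tauNormSq_le_one (hμ0 x)
      _ = 1 := by simp [hμ1]
  have hcauchy : (∑ x, μ x * ∑ a, (tau ((M x a)ᴴ * (M x a - N x a))).re) ^ 2 ≤ δ ^ 2 :=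
    calc _ ≤ (∑ x, μ x * ∑ a, tauNormSq (M x a)) * ∑ x, μ x * ∑ a, tauNormSq (M x a - N x a) :=
          sq_sum_mul_sum_le_of_sq_le_mul _ _ (fun x _ => hμ0 x)
            (fun _ _ _ _ => tauNormSq_nonneg _) (fun _ _ _ _ => tauNormSq_nonneg _)
            fun _ _ _ _ => sq_re_tau_conjTranspose_mul_le _ _
      _ ≤ 1 * δ ^ 2 := mul_le_mul hmass h (sum_nonneg fun x _ =>
          mul_nonneg (hμ0 x) (sum_nonneg fun _ _ => tauNormSq_nonneg _)) zero_le_one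
      _ = δ ^ 2 := one_mul _
  calc _ ≤ ∑ x, μ x * ∑ a, (tau ((M x a)ᴴ * (M x a - N x a))).re :=
        sum_le_sum fun x _ => mul_le_mul_of_nonneg_left (sum_le_sum fun a _ =>
          sum_ite_re_tau_mul_le ((hM x).1 a).1 ((hM x).1 a).2 (hN x).2 a) (hμ0 x)
    _ ≤ δ := le_of_sq_le_sq hcauchy hδ
end

section
/- Let {A^x_a} be a submeasurement and {B^x_a} a measurement with E_x Σ_{a≠b} τ(A^x_a B^x_b) ≤ γ. Then E_x Σ_a ‖A^x_a − A^x_a B^x_a‖_τ² ≤ γ and E_x Σ_a ‖A^x_a B^x_a − A^x B^x_a‖_τ² ≤ γ, where A^x = Σ_a A^x_a. -/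
/-!
For `0 ≤ P, Q ≤ 1` one has `‖PQ‖_τ² = τ(P²Q²) ≤ τ(PQ²) ≤ τ(PQ)`, because `P² ≤ P`, `Q² ≤ Q`
and `τ(XY) ≥ 0` for positive `X, Y`. Taking `P = A_a`, `Q = 1 - B_a = Σ_{b ≠ a} B_b`, resp.
`P = A - A_a = Σ_{b ≠ a} A_b`, `Q = B_a`, and summing over `a`, the right-hand sides add up to the
off-diagonal consistency sum `Σ_{a ≠ b} τ(A_a B_b)`.
-/

open scoped Matrix ComplexOrder BigOperators

open Matrix
open scoped MatrixOrder

theorem Fintype.sum_ite_eq_zero {ι M : Type*} [Fintype ι] [DecidableEq ι] [AddCommGroup M]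
    (i : ι) (f : ι → M) : ∑ j, (if i = j then 0 else f j) = ∑ j, f j - f i := by
  simp [Finset.sum_ite, Finset.filter_ne, Finset.sum_erase_eq_sub]

theorem Fintype.sum_ite_eq_zero' {ι M : Type*} [Fintype ι] [DecidableEq ι] [AddCommGroup M]
    (i : ι) (f : ι → M) : ∑ j, (if j = i then 0 else f j) = ∑ j, f j - f i := by
  simp [Finset.sum_ite, Finset.filter_ne', Finset.sum_erase_eq_sub]

namespace Matrix

variable {m 𝕜 : Type*} [Fintype m] [DecidableEq m] [RCLike 𝕜]

lemma exists_isSelfAdjoint_mul_self_eq {P : Matrix m m 𝕜} (hP : 0 ≤ P) :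
    ∃ s, IsSelfAdjoint s ∧ s * s = P :=
  ⟨CFC.sqrt P, (CFC.sqrt_nonneg P).isSelfAdjoint, CFC.sqrt_mul_sqrt_self P hP⟩

lemma mul_self_le_self {P : Matrix m m 𝕜} (hP0 : 0 ≤ P) (hP1 : P ≤ 1) : P * P ≤ P := by
  obtain ⟨s, hs, rfl⟩ := exists_isSelfAdjoint_mul_self_eq hP0
  calc s * s * (s * s) = star s * (s * s) * s := by rw [hs.star_eq]; simp only [mul_assoc]
    _ ≤ star s * 1 * s := star_left_conjugate_le_conjugate hP1 s
    _ = s * s := by rw [hs.star_eq, mul_one]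

lemma trace_mul_nonneg {P Q : Matrix m m 𝕜} (hP : 0 ≤ P) (hQ : 0 ≤ Q) : 0 ≤ (P * Q).trace := by
  obtain ⟨s, hs, rfl⟩ := exists_isSelfAdjoint_mul_self_eq hP
  have := (nonneg_iff_posSemidef.mp (star_left_conjugate_nonneg hQ s)).trace_nonneg
  rwa [hs.star_eq, trace_mul_cycle] at this

lemma trace_mul_le_trace_mul {P Q R : Matrix m m 𝕜} (hP : 0 ≤ P) (hQR : Q ≤ R) :
    (P * Q).trace ≤ (P * R).trace := by
  simpa [mul_sub, trace_sub] using trace_mul_nonneg hP (sub_nonneg.mpr hQR)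

lemma trace_conjTranspose_mul_self_le {P Q : Matrix m m 𝕜} (hP0 : 0 ≤ P) (hP1 : P ≤ 1)
    (hQ0 : 0 ≤ Q) (hQ1 : Q ≤ 1) : ((P * Q)ᴴ * (P * Q)).trace ≤ (P * Q).trace := by
  have hQQ : 0 ≤ Q * Q := by
    simpa only [(IsSelfAdjoint.of_nonneg hQ0).star_eq] using star_mul_self_nonneg Q
  calc ((P * Q)ᴴ * (P * Q)).trace = (Q * Q * (P * P)).trace := by
        rw [conjTranspose_mul, (nonneg_iff_posSemidef.mp hP0).isHermitian.eq,
          (nonneg_iff_posSemidef.mp hQ0).isHermitian.eq, ← mul_assoc, trace_mul_comm]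
        simp only [mul_assoc]
    _ ≤ (Q * Q * P).trace := trace_mul_le_trace_mul hQQ (mul_self_le_self hP0 hP1)
    _ = (P * (Q * Q)).trace := by rw [trace_mul_comm]
    _ ≤ (P * Q).trace := trace_mul_le_trace_mul hP0 (mul_self_le_self hQ0 hQ1)

end Matrix

section Tau

variable {n : ℕ}

lemma tau_sub (P Q : Matrix (Fin n) (Fin n) ℂ) : tau (P - Q) = tau P - tau Q := by
  simp [tau, sub_div]

lemma tau_sum {ι : Type*} (s : Finset ι) (P : ι → Matrix (Fin n) (Fin n) ℂ) :
    tau (∑ i ∈ s, P i) = ∑ i ∈ s, tau (P i) := by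
  simp [tau, trace_sum, Finset.sum_div]

lemma tauNormSq_mul_le {P Q : Matrix (Fin n) (Fin n) ℂ} (hP0 : 0 ≤ P) (hP1 : P ≤ 1)
    (hQ0 : 0 ≤ Q) (hQ1 : Q ≤ 1) : tauNormSq (P * Q) ≤ (tau (P * Q)).re := by
  unfold tauNormSq tau
  rw [← Complex.ofReal_natCast, Complex.div_ofReal_re, Complex.div_ofReal_re]
  gcongr
  exact trace_conjTranspose_mul_self_le hP0 hP1 hQ0 hQ1

end Tau

section Measurement

variable {n : ℕ} {α : Type*} [Fintype α] {M : α → Matrix (Fin n) (Fin n) ℂ}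

lemma IsSubmeasurement.nonneg (hM : IsSubmeasurement M) (a : α) : 0 ≤ M a :=
  nonneg_iff_posSemidef.mpr (hM.1 a)

lemma IsSubmeasurement.le_sum (hM : IsSubmeasurement M) (a : α) : M a ≤ ∑ b, M b :=
  Finset.single_le_sum (fun b _ => hM.nonneg b) (Finset.mem_univ a)

lemma IsSubmeasurement.sum_le_one (hM : IsSubmeasurement M) : ∑ a, M a ≤ 1 := hM.2

lemma IsSubmeasurement.le_one (hM : IsSubmeasurement M) (a : α) : M a ≤ 1 :=
  (hM.le_sum a).trans hM.sum_le_one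

lemma IsSubmeasurement.sum_sub_le_one (hM : IsSubmeasurement M) (a : α) :
    ∑ b, M b - M a ≤ 1 :=
  (sub_le_self _ (hM.nonneg a)).trans hM.sum_le_one

lemma IsMeasurement.isSubmeasurement (hM : IsMeasurement M) : IsSubmeasurement M :=
  ⟨hM.1, by rw [hM.2, sub_self]; exact .zero⟩

end Measurement

section Consistency

variable {n : ℕ} {α : Type*} [Fintype α] [DecidableEq α] {A B : α → Matrix (Fin n) (Fin n) ℂ}

lemma IsSubmeasurement.sum_tauNormSq_sub_mul_le (hA : IsSubmeasurement A)
    (hB : IsMeasurement B) :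
    ∑ a, tauNormSq (A a - A a * B a) ≤
      ∑ a, ∑ b, (if a = b then 0 else (tau (A a * B b)).re) := by
  have hB' := hB.isSubmeasurement
  calc ∑ a, tauNormSq (A a - A a * B a) = ∑ a, tauNormSq (A a * (1 - B a)) := by
        simp only [mul_sub, mul_one]
    _ ≤ ∑ a, (tau (A a * (1 - B a))).re :=
        Finset.sum_le_sum fun a _ => tauNormSq_mul_le (hA.nonneg a) (hA.le_one a)
          (sub_nonneg.mpr (hB'.le_one a)) (sub_le_self _ (hB'.nonneg a))
    _ = _ := by
        refine Finset.sum_congr rfl fun a _ => ?_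
        rw [Fintype.sum_ite_eq_zero, ← hB.2, mul_sub, Finset.mul_sum, tau_sub, tau_sum,
          Complex.sub_re, Complex.re_sum]

lemma IsSubmeasurement.sum_tauNormSq_mul_sub_sum_mul_le (hA : IsSubmeasurement A)
    (hB : IsMeasurement B) :
    ∑ a, tauNormSq (A a * B a - (∑ a', A a') * B a) ≤
      ∑ a, ∑ b, (if a = b then 0 else (tau (A a * B b)).re) := by
  have hB' := hB.isSubmeasurement
  calc ∑ a, tauNormSq (A a * B a - (∑ a', A a') * B a)
        = ∑ a, tauNormSq ((∑ a', A a' - A a) * B a) := by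
        refine Finset.sum_congr rfl fun a _ => ?_
        rw [← neg_sub, ← sub_mul]
        simp [tauNormSq]
    _ ≤ ∑ a, (tau ((∑ a', A a' - A a) * B a)).re :=
        Finset.sum_le_sum fun a _ => tauNormSq_mul_le (sub_nonneg.mpr (hA.le_sum a))
          (hA.sum_sub_le_one a) (hB'.nonneg a) (hB'.le_one a)
    _ = _ := by
        rw [Finset.sum_comm]
        refine Finset.sum_congr rfl fun a _ => ?_
        rw [Fintype.sum_ite_eq_zero', sub_mul, Finset.sum_mul, tau_sub, tau_sum,
          Complex.sub_re, Complex.re_sum]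

end Consistency

theorem cons_sub_meas_general {n : ℕ} {X α : Type*}
    [Fintype X] [Fintype α] [DecidableEq α]
    (μ : X → ℝ) (hμ0 : ∀ x, 0 ≤ μ x)
    (A B : X → α → Matrix (Fin n) (Fin n) ℂ)
    (hA : ∀ x, IsSubmeasurement (A x)) (hB : ∀ x, IsMeasurement (B x))
    (γ : ℝ)
    (h : ∑ x, μ x * ∑ a, ∑ b, (if a = b then 0 else (tau (A x a * B x b)).re) ≤ γ) :
    (∑ x, μ x * ∑ a, tauNormSq (A x a - A x a * B x a) ≤ γ) ∧
    (∑ x, μ x * ∑ a, tauNormSq (A x a * B x a - (∑ a', A x a') * B x a) ≤ γ) :=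
  ⟨(Finset.sum_le_sum fun x _ => mul_le_mul_of_nonneg_left
      ((hA x).sum_tauNormSq_sub_mul_le (hB x)) (hμ0 x)).trans h,
    (Finset.sum_le_sum fun x _ => mul_le_mul_of_nonneg_left
      ((hA x).sum_tauNormSq_mul_sub_sum_mul_le (hB x)) (hμ0 x)).trans h⟩

/-- If the submeasurement `A` is `γ`-consistent with the measurement `B`, then
`A^x_a ≈_{√γ} A^x_a B^x_a` and `A^x_a B^x_a ≈_{√γ} A^x B^x_a`, where `A^x = Σ_a A^x_a`. -/
theorem cons_sub_meas {n : ℕ} {X α : Type*}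
    [Fintype X] [Fintype α] [DecidableEq α]
    (μ : X → ℝ) (hμ0 : ∀ x, 0 ≤ μ x) (hμ1 : ∑ x, μ x = 1)
    (A B : X → α → Matrix (Fin n) (Fin n) ℂ)
    (hA : ∀ x, IsSubmeasurement (A x)) (hB : ∀ x, IsMeasurement (B x))
    (γ : ℝ)
    (h : ∑ x, μ x * ∑ a, ∑ b, (if a = b then 0 else (tau (A x a * B x b)).re) ≤ γ) :
    (∑ x, μ x * ∑ a, tauNormSq (A x a - A x a * B x a) ≤ γ) ∧
    (∑ x, μ x * ∑ a, tauNormSq (A x a * B x a - (∑ a', A x a') * B x a) ≤ γ) :=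
  cons_sub_meas_general μ hμ0 A B hA hB γ h
end

section
/- Let 𝒞 be an interpolable linear code of blocklength n, distance d over a finite field, with t = n − d + 1; i.e., for every t coordinates i₁,…,i_t there is a linear map φ : Σ^t → 𝒞 sending (a₁,…,a_t) to the unique codeword with prescribed values at those coordinates. Then for any x₁,…,x_t ∈ [n] and any tuple (g₁,…,g_t) of codewords of 𝒞^{⊗m}, there exists h ∈ 𝒞^{⊗(m+1)} with h|_{x_j} = g_j for all j ∈ [t]. -/
open scoped BigOperators

/-- `c : [n]^m → F` belongs to the tensor code `C^{⊗m}` if its restriction to every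
axis-parallel line lies in `C`. -/
def InTensorCode {n m : ℕ} {F : Type*} (C : Set (Fin n → F))
    (c : (Fin m → Fin n) → F) : Prop :=
  ∀ (j : Fin m) (u : Fin m → Fin n), (fun s => c (Function.update u j s)) ∈ C

/-- The restriction `h|_x` of `h : [n]^{m+1} → F` obtained by fixing the last coordinate to `x`. -/
def restrictLast {n m : ℕ} {F : Type*} (h : (Fin (m + 1) → Fin n) → F) (x : Fin n) :
    (Fin m → Fin n) → F := fun u => h (Fin.snoc u x)

/-- Proposition 2.18: if `C` is an interpolable linear code of blocklength `n` and distance `d`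
(with `t = n − d + 1`), then any `t`-tuple of codewords of `C^{⊗m}` prescribed at distinct
coordinates `x₁, …, x_t` extends to a codeword `h ∈ C^{⊗(m+1)}` with `h|_{x_j} = g_j`. -/
theorem tensor_code_interpolate_tuple {n m d : ℕ}
    {F : Type*} [Field F] [Fintype F] [DecidableEq F]
    (C : Submodule F (Fin n → F))
    (hdist : ∀ c ∈ C, ∀ c' ∈ C, c ≠ c' →
      d ≤ (Finset.univ.filter fun i => c i ≠ c' i).card)
    (hinterp : ∀ ι : Fin (n - d + 1) → Fin n, Function.Injective ι →
      ∃ φ : (Fin (n - d + 1) → F) →ₗ[F] (Fin n → F),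
        (∀ a, φ a ∈ C) ∧ ∀ a j, φ a (ι j) = a j)
    (x : Fin (n - d + 1) → Fin n) (hx : Function.Injective x)
    (g : Fin (n - d + 1) → ((Fin m → Fin n) → F))
    (hg : ∀ j, InTensorCode (C : Set (Fin n → F)) (g j)) :
    ∃ h : (Fin (m + 1) → Fin n) → F, InTensorCode (C : Set (Fin n → F)) h ∧
      ∀ j, restrictLast h (x j) = g j := by
  obtain ⟨φ, hφC, hφval⟩ := hinterp x hx
  refine ⟨fun v => φ (fun j => g j (Fin.init v)) (v (Fin.last m)), ?_, ?_⟩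
  · intro j' u
    induction j' using Fin.lastCases with
    | last =>
      have : (fun s => φ (fun j => g j (Fin.init (Function.update u (Fin.last m) s)))
          ((Function.update u (Fin.last m) s) (Fin.last m)))
          = φ (fun j => g j (Fin.init u)) := by
        funext s
        rw [Function.update_self, Fin.init_update_last]
      rw [this]
      exact hφC _
    | cast i =>
      have key : (fun s => φ (fun j => g j (Fin.init (Function.update u i.castSucc s)))
          ((Function.update u i.castSucc s) (Fin.last m)))
          = ∑ j, (φ (Pi.single j 1) (u (Fin.last m))) •
              (fun s => g j (Function.update (Fin.init u) i s)) := by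
        funext s
        have h1 : Fin.init (Function.update u i.castSucc s)
            = Function.update (Fin.init u) i s := by
          funext k
          simp [Fin.init, Function.update, Fin.castSucc_inj, Fin.ext_iff]
        have h2 : (Function.update u i.castSucc s) (Fin.last m) = u (Fin.last m) := by
          apply Function.update_of_ne
          exact (Fin.castSucc_lt_last i).ne'
        simp only [h1, h2]
        have expand : (fun j => g j (Function.update (Fin.init u) i s))
            = ∑ j, (g j (Function.update (Fin.init u) i s)) •
                (Pi.single j (1 : F) : Fin (n - d + 1) → F) := by
          have := pi_eq_sum_univ (fun j => g j (Function.update (Fin.init u) i s))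
          convert this using 2 with j
          funext k
          simp [Pi.single_apply, eq_comm]
        rw [expand]
        simp [Finset.sum_apply, mul_comm]
      rw [key]
      apply Submodule.sum_mem
      intro j _
      exact Submodule.smul_mem _ _ (hg j i (Fin.init u))
  · intro j
    funext u
    simp only [restrictLast, Fin.snoc_last, Fin.init_snoc]
    exact hφval _ j
end
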